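/- Assume lim_{j→∞} λ_j = 0 and lim_{j→∞} γ_j = 0. Then for every ε ∈ (0,1) and every d ∈ ℕ one has n(ε,d) ≤ j(ε)^{min(d,d(ε))}; if moreover γ_1 > ε² (so that d(ε) ≥ 1), then additionally j(ε)^{min(d,d(ε))} ≤ n(ε^{2d(ε)}, d(ε)). Furthermore, n(ε,d) = n(ε,d(ε)) for every d ≥ d(ε). -/

import Mathlib

open Filter Real Set Topology
open scoped ENNReal NNReal

noncomputable section

/-- The weighted eigenvalues `λ_{k,j}`: `1` if `j = 1`, and `γ_k · λ_j` if `j ≥ 2`. -/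
def lamKJ (γ lam : ℕ → ℝ) (k j : ℕ) : ℝ := if j = 1 then 1 else γ k * lam j

/-- The information complexity `n(ε,d)`: the extended-natural cardinality of the set of
`d`-tuples of positive integers `(n_1,…,n_d)` with `λ_{1,n_1} ⋯ λ_{d,n_d} > ε²`. -/
def infoN (γ lam : ℕ → ℝ) (ε : ℝ) (d : ℕ) : ℕ∞ :=
  {n : Fin d → ℕ | (∀ i, 1 ≤ n i) ∧ ε ^ 2 < ∏ i, lamKJ γ lam (i.1 + 1) (n i)}.encard

/-- EXP-SPT with a given exponent `p`: there is `C ≥ 0` with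
`n(ε,d) ≤ C (1 + log ε⁻¹)^p` for all `d ≥ 1` and `ε ∈ (0,1]`. -/
def ExpSPTwith (γ lam : ℕ → ℝ) (p : ℝ) : Prop :=
  ∃ C : ℝ, 0 ≤ C ∧ ∀ d : ℕ, 1 ≤ d → ∀ ε : ℝ, 0 < ε → ε ≤ 1 →
    (infoN γ lam ε d : ℝ≥0∞) ≤ ENNReal.ofReal (C * (1 + Real.log ε⁻¹) ^ p)

/-- Exponential strong polynomial tractability. -/
def ExpSPT (γ lam : ℕ → ℝ) : Prop := ∃ p : ℝ, 0 ≤ p ∧ ExpSPTwith γ lam p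

/-- Exponential polynomial tractability: there are `C, q, p ≥ 0` with
`n(ε,d) ≤ C d^q (1 + log ε⁻¹)^p` for all `d ≥ 1` and `ε ∈ (0,1]`. -/
def ExpPT (γ lam : ℕ → ℝ) : Prop :=
  ∃ C q p : ℝ, 0 ≤ C ∧ 0 ≤ q ∧ 0 ≤ p ∧ ∀ d : ℕ, 1 ≤ d → ∀ ε : ℝ, 0 < ε → ε ≤ 1 →
    (infoN γ lam ε d : ℝ≥0∞) ≤ ENNReal.ofReal (C * (d : ℝ) ^ q * (1 + Real.log ε⁻¹) ^ p)

/-- EXP-QPT with a given exponent `t`. -/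
def ExpQPTwith (γ lam : ℕ → ℝ) (t : ℝ) : Prop :=
  ∃ C : ℝ, 0 ≤ C ∧ ∀ d : ℕ, 1 ≤ d → ∀ ε : ℝ, 0 < ε → ε ≤ 1 →
    (infoN γ lam ε d : ℝ≥0∞) ≤
      ENNReal.ofReal (C * Real.exp (t * (1 + Real.log d) * (1 + Real.log (1 + Real.log ε⁻¹))))

/-- Exponential quasi-polynomial tractability. -/
def ExpQPT (γ lam : ℕ → ℝ) : Prop := ∃ t : ℝ, 0 ≤ t ∧ ExpQPTwith γ lam t

/-- Exponential `(s,t)`-weak tractability: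
`log max(1, n(ε,d)) / (d^t + (1 + log ε⁻¹)^s) → 0` as `d + ε⁻¹ → ∞`
(in particular `n(ε,d)` is finite for all such `d, ε`). -/
def ExpSTWT (γ lam : ℕ → ℝ) (s t : ℝ) : Prop :=
  ∀ δ : ℝ, 0 < δ → ∃ T : ℝ, ∀ d : ℕ, 1 ≤ d → ∀ ε : ℝ, 0 < ε → ε ≤ 1 →
    T ≤ (d : ℝ) + ε⁻¹ →
    ∃ N : ℕ, infoN γ lam ε d = (N : ℕ∞) ∧
      Real.log (max 1 (N : ℝ)) / ((d : ℝ) ^ t + (1 + Real.log ε⁻¹) ^ s) < δ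

/-- `j(ε) = max { j ≥ 1 : λ_j > ε² }` (a well-defined maximum when `λ_j → 0`). -/
def jEps (lam : ℕ → ℝ) (ε : ℝ) : ℕ := sSup {j : ℕ | 1 ≤ j ∧ ε ^ 2 < lam j}

/-- `d(ε) = max { d ≥ 1 : γ_d > ε² }`, with `d(ε) = 0` if `γ_1 ≤ ε²`
(a well-defined maximum when `γ_d → 0`). -/
def dEps (γ : ℕ → ℝ) (ε : ℝ) : ℕ := sSup {d : ℕ | 1 ≤ d ∧ ε ^ 2 < γ d}

/-!
Since every `λ_{k,j}` lies in `[0,1]`, a product exceeding `ε²` has every factor exceeding `ε²`.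
A factor `γ_k λ_j` with `j ≥ 2` is at most `min(γ_k, λ_j)`, so it exceeds `ε²` only when
`k ≤ d(ε)` and `j ≤ j(ε)`. Hence admissible tuples lie in the box with coordinates in `[1, j(ε)]`
up to index `d(ε)` and equal to `1` beyond it, which gives the upper bound and shows that the
coordinates beyond `d(ε)` carry no information. Conversely, on the box with `d = d(ε)` every factor
exceeds `ε⁴`, so the product exceeds `ε^{4 d(ε)}`.
-/

open Finset in
def cutoffBox (J D d : ℕ) : Finset (Fin d → ℕ) :=
  Fintype.piFinset fun i => if (i : ℕ) < D then Icc 1 J else {1}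

def infoSet (γ lam : ℕ → ℝ) (ε : ℝ) (d : ℕ) : Set (Fin d → ℕ) :=
  {n | (∀ i, 1 ≤ n i) ∧ ε ^ 2 < ∏ i, lamKJ γ lam (i.1 + 1) (n i)}

section

variable {γ lam : ℕ → ℝ} {ε : ℝ} {J D d : ℕ}

lemma infoN_eq_encard : infoN γ lam ε d = (infoSet γ lam ε d).encard := rfl

lemma bddAbove_setOf_lt_of_tendsto_zero {f : ℕ → ℝ} {c : ℝ} (hf : Tendsto f atTop (𝓝 0))
    (hc : 0 < c) : BddAbove {j | 1 ≤ j ∧ c < f j} := by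
  have hfin : {j | ¬ f j < c}.Finite := by
    rw [← Nat.cofinite_eq_atTop] at hf
    exact hf.eventually_lt_const hc
  exact (hfin.subset fun j hj => not_lt.2 hj.2.le).bddAbove

lemma lt_iff_le_sSup_of_antitoneOn {f : ℕ → ℝ} {c : ℝ} (hf : AntitoneOn f (Ici 1))
    (hbdd : BddAbove {j | 1 ≤ j ∧ c < f j}) (h1 : c < f 1) {j : ℕ} (hj : 1 ≤ j) :
    c < f j ↔ j ≤ sSup {j | 1 ≤ j ∧ c < f j} := by
  refine ⟨fun h => le_csSup hbdd ⟨hj, h⟩, fun hjs => ?_⟩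
  have hmem : sSup {j | 1 ≤ j ∧ c < f j} ∈ {j | 1 ≤ j ∧ c < f j} :=
    Nat.sSup_mem ⟨1, le_rfl, h1⟩ hbdd
  exact hmem.2.trans_le (hf hj hmem.1 hjs)

lemma lamKJ_one (γ lam : ℕ → ℝ) (k : ℕ) : lamKJ γ lam k 1 = 1 := if_pos rfl

lemma lamKJ_of_ne_one {k j : ℕ} (hj : j ≠ 1) : lamKJ γ lam k j = γ k * lam j := if_neg hj

lemma lamKJ_mem_unitInterval {k j : ℕ} (hγ : γ k ∈ unitInterval) (hlam : lam j ∈ unitInterval) :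
    lamKJ γ lam k j ∈ unitInterval := by
  unfold lamKJ
  split_ifs
  exacts [unitInterval.one_mem, unitInterval.mul_mem hγ hlam]

lemma lt_and_lt_of_lt_lamKJ {c : ℝ} {k j : ℕ} (hγ : γ k ∈ unitInterval)
    (hlam : lam j ∈ unitInterval) (hj : j ≠ 1) (h : c < lamKJ γ lam k j) :
    c < γ k ∧ c < lam j := by
  rw [lamKJ_of_ne_one hj] at h
  exact ⟨h.trans_le (mul_le_of_le_one_right hγ.1 hlam.2),
    h.trans_le (mul_le_of_le_one_left hlam.1 hγ.2)⟩

lemma lt_lamKJ_of_mem_infoSet (hγ : ∀ k, 1 ≤ k → γ k ∈ unitInterval)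
    (hlam : ∀ j, 1 ≤ j → lam j ∈ unitInterval) {n : Fin d → ℕ} (hn : n ∈ infoSet γ lam ε d)
    (i : Fin d) : ε ^ 2 < lamKJ γ lam (i + 1) (n i) := by
  have hI : ∀ i : Fin d, lamKJ γ lam (i + 1) (n i) ∈ unitInterval := fun i =>
    lamKJ_mem_unitInterval (hγ _ (Nat.le_add_left 1 i)) (hlam _ (hn.1 i))
  calc ε ^ 2 < ∏ j : Fin d, lamKJ γ lam (j + 1) (n j) := hn.2
    _ ≤ ∏ j ∈ ({i} : Finset (Fin d)), lamKJ γ lam (j + 1) (n j) :=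
      Finset.prod_le_prod_of_subset_of_le_one (Finset.subset_univ _) (fun j _ => (hI j).1)
        fun j _ _ => (hI j).2
    _ = lamKJ γ lam (i + 1) (n i) := Finset.prod_singleton _ _

lemma card_cutoffBox : (cutoffBox J D d).card = J ^ min d D := by
  simp [cutoffBox, Fintype.card_piFinset, apply_ite Finset.card, Finset.prod_ite,
    Fin.card_filter_val_lt]

lemma eq_one_of_mem_cutoffBox {n : Fin d → ℕ} (hn : n ∈ cutoffBox J D d) {i : Fin d}
    (hi : D ≤ i) : n i = 1 := by
  simpa [cutoffBox, not_lt.2 hi] using Fintype.mem_piFinset.1 hn i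

lemma infoSet_subset_cutoffBox (hγ : ∀ k, 1 ≤ k → γ k ∈ unitInterval)
    (hlam : ∀ j, 1 ≤ j → lam j ∈ unitInterval) (hJ1 : 1 ≤ J)
    (hJ : ∀ j, 1 ≤ j → ε ^ 2 < lam j → j ≤ J) (hD : ∀ k, 1 ≤ k → ε ^ 2 < γ k → k ≤ D) :
    infoSet γ lam ε d ⊆ cutoffBox J D d := by
  intro n hn
  refine Fintype.mem_piFinset.2 fun i => ?_
  by_cases h1 : n i = 1
  · split_ifs <;> simp [h1, hJ1]
  obtain ⟨hγi, hlami⟩ := lt_and_lt_of_lt_lamKJ (hγ _ (Nat.le_add_left 1 i)) (hlam _ (hn.1 i)) h1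
    (lt_lamKJ_of_mem_infoSet hγ hlam hn i)
  have hiD : (i : ℕ) < D := hD _ (Nat.le_add_left 1 i) hγi
  simpa [hiD] using ⟨hn.1 i, hJ _ (hn.1 i) hlami⟩

lemma cutoffBox_subset_infoSet (hε : 0 < ε) (hε1 : ε < 1) (hD1 : 1 ≤ D)
    (hJ : ∀ j, 1 ≤ j → j ≤ J → ε ^ 2 < lam j) (hD : ∀ k, 1 ≤ k → k ≤ D → ε ^ 2 < γ k) :
    ↑(cutoffBox J D D) ⊆ infoSet γ lam (ε ^ (2 * D)) D := by
  intro n hn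
  have hnI : ∀ i : Fin D, n i ∈ Finset.Icc 1 J := fun i => by
    simpa [cutoffBox, i.isLt] using Fintype.mem_piFinset.1 hn i
  have hfac : ∀ i : Fin D, ε ^ 4 < lamKJ γ lam (i + 1) (n i) := by
    intro i
    obtain ⟨hn1, hnJ⟩ := Finset.mem_Icc.1 (hnI i)
    by_cases h1 : n i = 1
    · rw [h1, lamKJ_one]
      exact pow_lt_one₀ hε.le hε1 (by norm_num)
    rw [lamKJ_of_ne_one h1, show ε ^ 4 = ε ^ 2 * ε ^ 2 by ring]
    exact mul_lt_mul'' (hD _ (Nat.le_add_left 1 i) i.isLt) (hJ _ hn1 hnJ) (by positivity)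
      (by positivity)
  refine ⟨fun i => (Finset.mem_Icc.1 (hnI i)).1, ?_⟩
  calc (ε ^ (2 * D)) ^ 2 = ∏ _i : Fin D, ε ^ 4 := by
        rw [Finset.prod_const, Finset.card_univ, Fintype.card_fin, ← pow_mul, ← pow_mul]
        ring_nf
    _ < ∏ i : Fin D, lamKJ γ lam (i + 1) (n i) :=
      Finset.prod_lt_prod_of_nonempty (fun _ _ => by positivity) (fun i _ => hfac i)
        ⟨⟨0, hD1⟩, Finset.mem_univ _⟩

lemma infoN_add_eq_of_tail_eq_one {m k : ℕ}
    (hone : ∀ n ∈ infoSet γ lam ε (m + k), ∀ j : Fin k, n (Fin.natAdd m j) = 1) :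
    infoN γ lam ε (m + k) = infoN γ lam ε m := by
  let pad : (Fin m → ℕ) → (Fin (m + k) → ℕ) := fun n => Fin.append n fun _ => 1
  have hpad : Function.Injective pad := fun n n' h => by
    funext i
    simpa [pad] using congrFun h (Fin.castAdd k i)
  have hprod : ∀ n, ∏ i : Fin (m + k), lamKJ γ lam (i + 1) (pad n i)
      = ∏ i : Fin m, lamKJ γ lam (i + 1) (n i) := fun n => by
    simp [pad, Fin.prod_univ_add, lamKJ_one]
  have himage : infoSet γ lam ε (m + k) = pad '' infoSet γ lam ε m := by
    ext n
    constructor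
    · intro hn
      have hn_eq : pad (fun i => n (Fin.castAdd k i)) = n := by
        conv_rhs => rw [← Fin.append_castAdd_natAdd (f := n)]
        simp only [pad, hone n hn]
      refine ⟨_, ⟨fun i => hn.1 _, ?_⟩, hn_eq⟩
      rw [← hprod, hn_eq]
      exact hn.2
    · rintro ⟨n, hn, rfl⟩
      refine ⟨fun i => ?_, by rw [hprod]; exact hn.2⟩
      refine Fin.addCases (fun _ => ?_) (fun _ => ?_) i <;> simp [pad, hn.1]
  rw [infoN_eq_encard, infoN_eq_encard, himage, hpad.encard_image]

end

theorem stmt11_general (γ lam : ℕ → ℝ)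
    (hlam_anti : AntitoneOn lam (Set.Ici 1)) (hlam1 : lam 1 = 1)
    (hlam_nonneg : ∀ j, 1 ≤ j → 0 ≤ lam j)
    (hγ_anti : AntitoneOn γ (Set.Ici 1))
    (hγ_pos : ∀ j, 1 ≤ j → 0 < γ j) (hγ_le : ∀ j, 1 ≤ j → γ j ≤ 1)
    (hlam0 : Tendsto lam atTop (nhds 0)) (hγ0 : Tendsto γ atTop (nhds 0)) :
    ∀ ε : ℝ, 0 < ε → ε < 1 →
      (∀ d : ℕ, 1 ≤ d →
        infoN γ lam ε d ≤ ((jEps lam ε ^ min d (dEps γ ε) : ℕ) : ℕ∞)) ∧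
      (ε ^ 2 < γ 1 → ∀ d : ℕ, 1 ≤ d →
        ((jEps lam ε ^ min d (dEps γ ε) : ℕ) : ℕ∞) ≤
          infoN γ lam (ε ^ (2 * dEps γ ε)) (dEps γ ε)) ∧
      (∀ d : ℕ, dEps γ ε ≤ d → infoN γ lam ε d = infoN γ lam ε (dEps γ ε)) := by
  intro ε hε hε1
  have hε2 : 0 < ε ^ 2 := by positivity
  have hγI : ∀ k, 1 ≤ k → γ k ∈ unitInterval := fun k hk => ⟨(hγ_pos k hk).le, hγ_le k hk⟩
  have hlamI : ∀ j, 1 ≤ j → lam j ∈ unitInterval := fun j hj =>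
    ⟨hlam_nonneg j hj, hlam1 ▸ hlam_anti Set.self_mem_Ici hj hj⟩
  have hγbdd := bddAbove_setOf_lt_of_tendsto_zero hγ0 hε2
  have hlam1ε : ε ^ 2 < lam 1 := hlam1 ▸ pow_lt_one₀ hε.le hε1 two_ne_zero
  have hJ : ∀ j, 1 ≤ j → (ε ^ 2 < lam j ↔ j ≤ jEps lam ε) := fun _ =>
    lt_iff_le_sSup_of_antitoneOn hlam_anti (bddAbove_setOf_lt_of_tendsto_zero hlam0 hε2) hlam1ε
  have hJ1 : 1 ≤ jEps lam ε := (hJ 1 le_rfl).1 hlam1ε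
  have hbox : ∀ d, infoSet γ lam ε d ⊆ cutoffBox (jEps lam ε) (dEps γ ε) d := fun _ =>
    infoSet_subset_cutoffBox hγI hlamI hJ1 (fun j hj => (hJ j hj).1)
      fun k hk h => le_csSup hγbdd ⟨hk, h⟩
  refine ⟨fun d _ => ?_, fun hγ1 d _ => ?_, fun d hd => ?_⟩
  · rw [infoN_eq_encard, ← card_cutoffBox, ← Set.encard_coe_eq_coe_finsetCard]
    exact Set.encard_mono (hbox d)
  · have hD : ∀ k, 1 ≤ k → (ε ^ 2 < γ k ↔ k ≤ dEps γ ε) := fun _ =>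
      lt_iff_le_sSup_of_antitoneOn hγ_anti hγbdd hγ1
    have hD1 : 1 ≤ dEps γ ε := (hD 1 le_rfl).1 hγ1
    calc ((jEps lam ε ^ min d (dEps γ ε) : ℕ) : ℕ∞)
        ≤ (jEps lam ε ^ min (dEps γ ε) (dEps γ ε) : ℕ) := by
          rw [min_self]
          exact_mod_cast Nat.pow_le_pow_right hJ1 (min_le_right _ _)
      _ = (cutoffBox (jEps lam ε) (dEps γ ε) (dEps γ ε) : Set _).encard := by
          rw [Set.encard_coe_eq_coe_finsetCard, card_cutoffBox]
      _ ≤ infoN γ lam (ε ^ (2 * dEps γ ε)) (dEps γ ε) :=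
          Set.encard_mono <| cutoffBox_subset_infoSet hε hε1 hD1
            (fun j hj hjJ => (hJ j hj).2 hjJ) fun k hk hkD => (hD k hk).2 hkD
  · obtain ⟨k, rfl⟩ := Nat.exists_eq_add_of_le hd
    exact infoN_add_eq_of_tail_eq_one fun n hn j =>
      eq_one_of_mem_cutoffBox (hbox _ hn) (Nat.le_add_right _ _)

/-- Lemma 1: if λ_j → 0 and γ_j → 0 then for every ε ∈ (0,1) and d ≥ 1,
n(ε,d) ≤ j(ε)^min(d,d(ε)); if moreover γ_1 > ε², then additionally
j(ε)^min(d,d(ε)) ≤ n(ε^(2d(ε)), d(ε)); and n(ε,d) = n(ε,d(ε)) for every d ≥ d(ε). -/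
theorem stmt11 (γ lam : ℕ → ℝ)
    (hlam_anti : AntitoneOn lam (Set.Ici 1)) (hlam1 : lam 1 = 1) (hlam2 : 0 < lam 2)
    (hlam_nonneg : ∀ j, 1 ≤ j → 0 ≤ lam j)
    (hγ_anti : AntitoneOn γ (Set.Ici 1))
    (hγ_pos : ∀ j, 1 ≤ j → 0 < γ j) (hγ_le : ∀ j, 1 ≤ j → γ j ≤ 1)
    (hlam0 : Tendsto lam atTop (nhds 0)) (hγ0 : Tendsto γ atTop (nhds 0)) :
    ∀ ε : ℝ, 0 < ε → ε < 1 →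
      (∀ d : ℕ, 1 ≤ d →
        infoN γ lam ε d ≤ ((jEps lam ε ^ min d (dEps γ ε) : ℕ) : ℕ∞)) ∧
      (ε ^ 2 < γ 1 → ∀ d : ℕ, 1 ≤ d →
        ((jEps lam ε ^ min d (dEps γ ε) : ℕ) : ℕ∞) ≤
          infoN γ lam (ε ^ (2 * dEps γ ε)) (dEps γ ε)) ∧
      (∀ d : ℕ, dEps γ ε ≤ d → infoN γ lam ε d = infoN γ lam ε (dEps γ ε)) :=
  stmt11_general γ lam hlam_anti hlam1 hlam_nonneg hγ_anti hγ_pos hγ_le hlam0 hγ0
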